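/- Let n be a positive integer and let c ∈ ℤ with c ∉ {0, 1, −1}. Set d = 2n+1 and consider the two models over ℤ: [F,G] with F = X^{2n+1} − c^{n+1}Y^{2n+1}, G = X^nY^{n+1}, and [F',G'] with F' = c^nX^{2n+1} − Y^{2n+1}, G' = X^nY^{n+1}. Then both models are ℤ-minimal models of the same class [φ] ∈ M_d(ℚ) — indeed [F',G'] = [F,G]^{(λ,A)} for (λ,A) = (c^{−n−1}, diag(c,1)) and Res_d(F,G) = Res_d(F',G') — but [F,G] and [F',G'] do not lie in the same orbit under the action of ℤ^× × GL₂(ℤ). -/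

import Mathlib

/-
The transformation law `Res(λ F_A, λ G_A) = λ^(2d) (det A)^(d² + d) Res(F, G)` comes from reading
the Sylvester matrix as the matrix of `(U, V) ↦ U F + V G` on binary forms: replacing `[F, G]` by
`B · [F, G]` multiplies it on the left by `B ⊗ 1`, and substituting `A` everywhere intertwines it
with the matrices of `P ↦ P ∘ A` on forms of degree `d - 1` and `2d - 1`, whose determinants are
powers of `det A` (checked on triangular matrices and transvections). For
`(λ, A) = (c^(-n-1), diag(c, 1))` the factor is `1`.

Minimality: if `λ F_A` and `λ G_A` are integral, the second row of
`A · [λ F_A, λ G_A] = λ det A · [F ∘ A, G ∘ A]` reads `γ λ F_A + δ λ G_A = λ det A · L₁^n L₂^(n+1)`,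
with `L₁, L₂` the linear forms given by the rows of `A` (as `G = X^n Y^(n+1)`). After rescaling `(λ, A)` so that `A` is
integral, comparing contents (Gauss's lemma) shows `λ (det A)^(n+1) ∈ ℤ`; so every resultant in
the class is the integral multiple `(λ (det A)^(n+1))^(2d)` of `Res(F, G)`.

Orbits: if `u ∈ ℤ^×` and `M ∈ GL₂(ℤ)` carried `[F, G]` to `[F', G']`, the first row of
`M · [F', G'] = u det M · [F ∘ M, G ∘ M]`, read at `X^d` and at `Y^d`, would make a prime `p ∣ c`
divide the first row of `M`, hence `det M`.
-/

noncomputable section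

/-- Determinant of the Sylvester matrix of two polynomials, given by coefficient
sequences `p` (regarded as having degree `m`) and `q` (regarded as having degree `n`). -/
def sylRes {K : Type*} [CommRing K] (m n : ℕ) (p q : ℕ → K) : K :=
  Matrix.det (Matrix.of fun i j : Fin (n + m) =>
    if (i : ℕ) < n then
      (if (i : ℕ) ≤ (j : ℕ) ∧ (j : ℕ) ≤ (i : ℕ) + m then p (m - ((j : ℕ) - (i : ℕ))) else 0)
    else
      (if (i : ℕ) - n ≤ (j : ℕ) ∧ (j : ℕ) ≤ ((i : ℕ) - n) + n then
        q (n - ((j : ℕ) - ((i : ℕ) - n))) else 0))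

/-- The binary form of degree `d` with coefficient sequence `f`
(`f i` is the coefficient of `X^i Y^(d-i)`). -/
def toForm {K : Type*} [CommRing K] (d : ℕ) (f : ℕ → K) : MvPolynomial (Fin 2) K :=
  ∑ i ∈ Finset.range (d + 1),
    MvPolynomial.C (f i) * MvPolynomial.X 0 ^ i * MvPolynomial.X 1 ^ (d - i)

/-- Substitution `X ↦ A₀₀ X + A₀₁ Y`, `Y ↦ A₁₀ X + A₁₁ Y`. -/
def substMat {K : Type*} [CommRing K] (A : Matrix (Fin 2) (Fin 2) K)
    (P : MvPolynomial (Fin 2) K) : MvPolynomial (Fin 2) K :=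
  MvPolynomial.eval₂ MvPolynomial.C
    (fun k => MvPolynomial.C (A k 0) * MvPolynomial.X 0 + MvPolynomial.C (A k 1) * MvPolynomial.X 1) P

/-- Coefficient sequence of a binary form of degree `d`. -/
def coeffVec {K : Type*} [CommRing K] (d : ℕ) (P : MvPolynomial (Fin 2) K) : ℕ → K :=
  fun i => MvPolynomial.coeff (Finsupp.single (0 : Fin 2) i + Finsupp.single (1 : Fin 2) (d - i)) P

/-- Coefficients of `F_A = δ·(F∘A) − β·(G∘A)` for `A = [[α,β],[γ,δ]]`. -/
def FA {K : Type*} [CommRing K] (d : ℕ) (f g : ℕ → K) (A : Matrix (Fin 2) (Fin 2) K) : ℕ → K :=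
  coeffVec d (MvPolynomial.C (A 1 1) * substMat A (toForm d f) -
    MvPolynomial.C (A 0 1) * substMat A (toForm d g))

/-- Coefficients of `G_A = −γ·(F∘A) + α·(G∘A)` for `A = [[α,β],[γ,δ]]`. -/
def GA {K : Type*} [CommRing K] (d : ℕ) (f g : ℕ → K) (A : Matrix (Fin 2) (Fin 2) K) : ℕ → K :=
  coeffVec d (-(MvPolynomial.C (A 1 0)) * substMat A (toForm d f) +
    MvPolynomial.C (A 0 0) * substMat A (toForm d g))

/-- The ideal `Res_R([φ])`: generated by the resultants of all models over `R`
of the form `[F,G]^{(λ,A)}` with `(λ,A) ∈ K^× × GL₂(K)`. -/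
def ResIdeal (R : Type*) {K : Type*} [CommRing R] [Field K] [Algebra R K]
    (d : ℕ) (f g : ℕ → K) : Ideal R :=
  Ideal.span { r : R | ∃ (l : K) (A : Matrix (Fin 2) (Fin 2) K), l ≠ 0 ∧ A.det ≠ 0 ∧
    (∀ i, ∃ a : R, algebraMap R K a = l * FA d f g A i) ∧
    (∀ i, ∃ b : R, algebraMap R K b = l * GA d f g A i) ∧
    algebraMap R K r = sylRes d d (fun i => l * FA d f g A i) (fun i => l * GA d f g A i) }

/-- The ideal `Res_R([φ]₁)`: as `ResIdeal` but with `A` restricted to affine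
(upper-triangular) transformations. -/
def AffResIdeal (R : Type*) {K : Type*} [CommRing R] [Field K] [Algebra R K]
    (d : ℕ) (f g : ℕ → K) : Ideal R :=
  Ideal.span { r : R | ∃ (l : K) (A : Matrix (Fin 2) (Fin 2) K), l ≠ 0 ∧ A.det ≠ 0 ∧ A 1 0 = 0 ∧
    (∀ i, ∃ a : R, algebraMap R K a = l * FA d f g A i) ∧
    (∀ i, ∃ b : R, algebraMap R K b = l * GA d f g A i) ∧
    algebraMap R K r = sylRes d d (fun i => l * FA d f g A i) (fun i => l * GA d f g A i) }

open MvPolynomial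
open scoped Matrix Kronecker

section BinaryForm

variable {K : Type*} [CommRing K]

lemma substMat_eq_aeval (A : Matrix (Fin 2) (Fin 2) K) :
    substMat A = aeval (R := K) fun k => C (A k 0) * X 0 + C (A k 1) * X 1 :=
  rfl

lemma single_add_single_inj {s t s' t' : ℕ} :
    Finsupp.single (0 : Fin 2) s + Finsupp.single 1 t =
        Finsupp.single (0 : Fin 2) s' + Finsupp.single 1 t' ↔ s = s' ∧ t = t' := by
  refine ⟨fun h => ⟨?_, ?_⟩, fun ⟨hs, ht⟩ => hs ▸ ht ▸ rfl⟩
  · simpa using DFunLike.congr_fun h 0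
  · simpa using DFunLike.congr_fun h 1

lemma C_mul_X_pow_mul_X_pow (a : K) (i j : ℕ) :
    C a * X (0 : Fin 2) ^ i * X 1 ^ j = monomial (Finsupp.single 0 i + Finsupp.single 1 j) a := by
  rw [X_pow_eq_monomial, X_pow_eq_monomial, C_apply, monomial_mul, monomial_mul, mul_one, mul_one,
    zero_add]

lemma coeffVec_X_pow_mul_X_pow_mul_toForm (a b m : ℕ) (h : ℕ → K) (t : ℕ) :
    coeffVec (a + b + m) (X 0 ^ a * X 1 ^ b * toForm m h) t =
      if a ≤ t ∧ t ≤ a + m then h (t - a) else 0 := by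
  have hterm : ∀ i ∈ Finset.range (m + 1),
      coeff (Finsupp.single 0 t + Finsupp.single 1 (a + b + m - t))
        (X (0 : Fin 2) ^ a * X 1 ^ b * (C (h i) * X 0 ^ i * X 1 ^ (m - i))) =
        if i + a = t ∧ a ≤ t then h i else 0 := by
    intro i hi
    rw [Finset.mem_range] at hi
    rw [show X (0 : Fin 2) ^ a * X 1 ^ b * (C (h i) * X 0 ^ i * X 1 ^ (m - i)) =
      C (h i) * X 0 ^ (a + i) * X 1 ^ (b + (m - i)) by ring, C_mul_X_pow_mul_X_pow,
      coeff_monomial]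
    simp only [single_add_single_inj]
    exact if_congr (by omega) rfl rfl
  rw [coeffVec, toForm, Finset.mul_sum, coeff_sum, Finset.sum_congr rfl hterm]
  split_ifs with hc
  · rw [Finset.sum_eq_single (t - a) (fun i _ hi => if_neg (by omega))
      (fun h => absurd (Finset.mem_range.2 (by omega)) h), if_pos (by omega)]
  · exact Finset.sum_eq_zero fun i hi => if_neg (by rw [Finset.mem_range] at hi; omega)

lemma coeffVec_toForm (m : ℕ) (h : ℕ → K) (t : ℕ) :
    coeffVec m (toForm m h) t = if t ≤ m then h t else 0 := by
  simpa using coeffVec_X_pow_mul_X_pow_mul_toForm 0 0 m h t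

lemma coeffVec_toForm_eq_of_forall_gt {d : ℕ} {h : ℕ → K}
    (hh : ∀ i, d < i → h i = 0) (i : ℕ) : coeffVec d (toForm d h) i = h i := by
  rw [coeffVec_toForm]
  split_ifs with hi
  · rfl
  · exact (hh i (by omega)).symm

lemma isHomogeneous_toForm (m : ℕ) (h : ℕ → K) : (toForm m h).IsHomogeneous m :=
  IsHomogeneous.sum _ _ _ fun i hi => by
    simpa [Nat.add_sub_cancel' (Nat.lt_succ_iff.mp (Finset.mem_range.mp hi))] using
      ((isHomogeneous_C_mul_X_pow (h i) 0 i).mul (isHomogeneous_X_pow 1 (m - i)))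

lemma toForm_coeffVec {P : MvPolynomial (Fin 2) K} {m : ℕ} (hP : P.IsHomogeneous m) :
    toForm m (coeffVec m P) = P := by
  ext μ
  have hμ : μ = Finsupp.single 0 (μ 0) + Finsupp.single 1 (μ 1) := by
    ext j; fin_cases j <;> simp
  have hdeg : μ.degree = μ 0 + μ 1 := by simp [Finsupp.degree_eq_sum, Fin.sum_univ_two]
  by_cases h : μ 0 + μ 1 = m
  · have h1 : μ 1 = m - μ 0 := by omega
    rw [hμ, h1, ← coeffVec, coeffVec_toForm, if_pos (by omega), coeffVec]
  · rw [hP.coeff_eq_zero (by omega), (isHomogeneous_toForm m _).coeff_eq_zero (by omega)]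

lemma toForm_mul_coeffVec {d : ℕ} {P : MvPolynomial (Fin 2) K}
    (hP : P.IsHomogeneous d) (l : K) : toForm d (fun i => l * coeffVec d P i) = C l * P := by
  rw [← toForm_coeffVec (hP.C_mul l)]
  congr 1
  funext i
  simp only [coeffVec, coeff_C_mul]

lemma toForm_add (d : ℕ) (h₁ h₂ : ℕ → K) : toForm d (h₁ + h₂) = toForm d h₁ + toForm d h₂ := by
  simp only [toForm, Pi.add_apply, map_add, add_mul, Finset.sum_add_distrib]

lemma toForm_ite_eq {d j : ℕ} (hj : j ≤ d) (a : K) :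
    toForm d (fun i => if i = j then a else 0) = C a * X 0 ^ j * X 1 ^ (d - j) := by
  rw [toForm, Finset.sum_eq_single j (fun i _ hij => by simp [hij])
    (fun h => absurd (Finset.mem_range.2 (by omega)) h), if_pos rfl]

lemma isHomogeneous_X_pow_mul_X_pow {k j : ℕ} (hj : j ≤ k) :
    (X 0 ^ (k - j) * X 1 ^ j : MvPolynomial (Fin 2) K).IsHomogeneous k := by
  simpa [Nat.sub_add_cancel hj] using (isHomogeneous_X_pow (R := K) (0 : Fin 2) (k - j)).mul
    (isHomogeneous_X_pow 1 j)

lemma add_pow_eq_toForm (x z : K) (m : ℕ) :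
    (C x * X 0 + C z * X 1) ^ m = toForm m fun i => m.choose i * x ^ i * z ^ (m - i) := by
  rw [add_pow, toForm]
  refine Finset.sum_congr rfl fun i _ => ?_
  simp only [map_mul, map_pow, map_natCast]
  ring

lemma coeffVec_add_pow (x z : K) (m i : ℕ) :
    coeffVec m ((C x * X 0 + C z * X 1) ^ m) i =
      if i ≤ m then m.choose i * x ^ i * z ^ (m - i) else 0 := by
  rw [add_pow_eq_toForm, coeffVec_toForm]

lemma substMat_substMat (A B : Matrix (Fin 2) (Fin 2) K) (P : MvPolynomial (Fin 2) K) :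
    substMat B (substMat A P) = substMat (A * B) P := by
  rw [substMat_eq_aeval, substMat_eq_aeval, substMat_eq_aeval, ← AlgHom.comp_apply, comp_aeval]
  congr 2
  funext k
  simp only [map_add, map_mul, aeval_C, aeval_X, Matrix.mul_apply, Fin.sum_univ_two,
    algebraMap_eq]
  ring

lemma substMat_one (P : MvPolynomial (Fin 2) K) : substMat 1 P = P := by
  conv_rhs => rw [← aeval_X_left_apply P]
  rw [substMat_eq_aeval]
  congr 2
  funext k
  fin_cases k <;> simp [Matrix.one_apply]

lemma MvPolynomial.IsHomogeneous.substMat {P : MvPolynomial (Fin 2) K} {m : ℕ}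
    (hP : P.IsHomogeneous m) (A : Matrix (Fin 2) (Fin 2) K) : (_root_.substMat A P).IsHomogeneous m := by
  rw [substMat_eq_aeval]
  simpa only [one_mul] using hP.aeval _ fun k =>
    ((isHomogeneous_C_mul_X (A k 0) 0).add (isHomogeneous_C_mul_X (A k 1) 1))

lemma substMat_smul_toForm (m : K) (A : Matrix (Fin 2) (Fin 2) K)
    (d : ℕ) (h : ℕ → K) : substMat (m • A) (toForm d h) = C (m ^ d) * substMat A (toForm d h) := by
  simp only [toForm, substMat_eq_aeval, map_sum, Finset.mul_sum, map_mul, map_pow, aeval_X,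
    aeval_C, Matrix.smul_apply, smul_eq_mul, algebraMap_eq, mul_assoc, ← mul_add, mul_pow]
  refine Finset.sum_congr rfl fun i hi => ?_
  obtain ⟨e, rfl⟩ : ∃ e, d = i + e := ⟨d - i, by rw [Finset.mem_range] at hi; omega⟩
  rw [Nat.add_sub_cancel_left, pow_add]
  ring

end BinaryForm

section SubstMatrix

variable {K : Type*} [CommRing K]

/-- Matrix of `P ↦ P ∘ A` on forms of degree `N - 1`, in the basis `X^(N-1-j) Y^j`, acting on
coefficient row vectors. -/
def substMatrix (N : ℕ) (A : Matrix (Fin 2) (Fin 2) K) : Matrix (Fin N) (Fin N) K :=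
  Matrix.of fun j t => coeffVec (N - 1) (substMat A (X 0 ^ (N - 1 - j) * X 1 ^ (j : ℕ))) (N - 1 - t)

lemma sum_C_coeffVec_mul_X_pow_mul_X_pow {N : ℕ} (hN : 0 < N) {P : MvPolynomial (Fin 2) K}
    (hP : P.IsHomogeneous (N - 1)) :
    ∑ j : Fin N, C (coeffVec (N - 1) P (N - 1 - j)) * (X 0 ^ (N - 1 - j) * X 1 ^ (j : ℕ)) = P := by
  obtain ⟨k, rfl⟩ : ∃ k, N = k + 1 := ⟨N - 1, by omega⟩
  simp only [Nat.add_sub_cancel] at hP ⊢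
  conv_rhs => rw [← toForm_coeffVec hP, toForm, ← Finset.sum_range_reflect]
  rw [Fin.sum_univ_eq_sum_range
    (fun j => C (coeffVec k P (k - j)) * (X 0 ^ (k - j) * X 1 ^ j))]
  refine Finset.sum_congr rfl fun j hj => ?_
  rw [Finset.mem_range] at hj
  rw [show k + 1 - 1 - j = k - j by omega, show k - (k - j) = j by omega, mul_assoc]

lemma coeffVec_substMat_eq_sum {N : ℕ} {P : MvPolynomial (Fin 2) K} (hP : P.IsHomogeneous (N - 1))
    (A : Matrix (Fin 2) (Fin 2) K) (t : Fin N) :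
    coeffVec (N - 1) (substMat A P) (N - 1 - t) =
      ∑ j : Fin N, coeffVec (N - 1) P (N - 1 - j) * substMatrix N A j t := by
  conv_lhs => rw [← sum_C_coeffVec_mul_X_pow_mul_X_pow t.pos hP]
  simp only [substMat_eq_aeval, map_sum, map_mul, aeval_C, algebraMap_eq, coeffVec, coeff_sum,
    coeff_C_mul, substMatrix, Matrix.of_apply]

lemma substMatrix_mul (N : ℕ) (A B : Matrix (Fin 2) (Fin 2) K) :
    substMatrix N (A * B) = substMatrix N A * substMatrix N B := by
  ext j t
  rw [Matrix.mul_apply, substMatrix, Matrix.of_apply, ← substMat_substMat,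
    coeffVec_substMat_eq_sum ((isHomogeneous_X_pow_mul_X_pow (by omega)).substMat A)]
  rfl

lemma substMatrix_one (N : ℕ) : substMatrix N (1 : Matrix (Fin 2) (Fin 2) K) = 1 := by
  ext j t
  rw [Matrix.one_apply, substMatrix, Matrix.of_apply, substMat_one, coeffVec, X_pow_eq_monomial,
    X_pow_eq_monomial, monomial_mul, one_mul, coeff_monomial]
  simp only [single_add_single_inj]
  have := j.isLt; have := t.isLt
  exact if_congr (by rw [Fin.ext_iff]; omega) rfl rfl

lemma substMatrix_apply_of_upper {N : ℕ} {A : Matrix (Fin 2) (Fin 2) K} (hA : A 1 0 = 0)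
    (j t : Fin N) :
    substMatrix N A j t = if j ≤ t then A 1 1 ^ (j : ℕ) *
      ((N - 1 - j).choose (N - 1 - t) * A 0 0 ^ (N - 1 - t) * A 0 1 ^ (t - j : ℕ)) else 0 := by
  have hj := j.isLt
  have hsubst : substMat A (X 0 ^ (N - 1 - j) * X 1 ^ (j : ℕ)) =
      C (A 1 1 ^ (j : ℕ)) * (X 0 ^ 0 * X 1 ^ (j : ℕ) * toForm (N - 1 - j) fun i =>
        (N - 1 - j).choose i * A 0 0 ^ i * A 0 1 ^ (N - 1 - j - i)) := by
    simp only [substMat_eq_aeval, map_mul, map_pow, aeval_X, hA, map_zero, zero_mul, zero_add,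
      ← add_pow_eq_toForm]
    ring
  have hcoeff := coeffVec_X_pow_mul_X_pow_mul_toForm 0 j (N - 1 - j)
    (fun i => (N - 1 - j).choose i * A 0 0 ^ i * A 0 1 ^ (N - 1 - j - i)) (N - 1 - t)
  rw [show 0 + (j : ℕ) + (N - 1 - j) = N - 1 by omega] at hcoeff
  rw [substMatrix, Matrix.of_apply, hsubst, coeffVec, coeff_C_mul, ← coeffVec, hcoeff]
  simp only [Fin.le_iff_val_le_val]
  split_ifs with hcond hjt hjt
  · rw [Nat.sub_zero, show N - 1 - j - (N - 1 - t) = t - j by omega]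
  · omega
  · omega
  · rw [mul_zero]

lemma det_substMatrix_of_upper (N : ℕ) {A : Matrix (Fin 2) (Fin 2) K} (hA : A 1 0 = 0) :
    (substMatrix N A).det = A.det ^ ∑ j ∈ Finset.range N, j := by
  rw [Matrix.det_of_isUpperTriangular fun j t htj => by
    rw [substMatrix_apply_of_upper hA, if_neg (not_le.2 htj : ¬ j ≤ t)]]
  simp only [substMatrix_apply_of_upper hA, le_refl, if_true, Nat.choose_self, Nat.cast_one,
    one_mul, Nat.sub_self, pow_zero, mul_one]
  rw [Fin.prod_univ_eq_prod_range (fun j => A 1 1 ^ j * A 0 0 ^ (N - 1 - j)),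
    Finset.prod_mul_distrib, Finset.prod_pow_eq_pow_sum, Finset.prod_pow_eq_pow_sum,
    show ∑ j ∈ Finset.range N, (N - 1 - j) = _ from Finset.sum_range_reflect (fun j => j) N,
    ← mul_pow, Matrix.det_fin_two, hA, mul_zero, sub_zero, mul_comm]

end SubstMatrix

section Sylvester

variable {K : Type*} [CommRing K]

/-- Row `i` of the Sylvester matrix, with `sylvesterIndex d i = (r, s)`, holds the coefficients of
`X^(d-1-s) Y^s · F r`; column `j` holds those of `X^(2d-1-j) Y^j`. -/
def sylvesterIndex (d : ℕ) : Fin (d + d) ≃ Fin 2 × Fin d :=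
  (finCongr (two_mul d).symm).trans finProdFinEquiv.symm

lemma sylvesterIndex_of_lt {d : ℕ} (i : Fin (d + d)) (hi : (i : ℕ) < d) :
    sylvesterIndex d i = (0, ⟨i, hi⟩) := by
  ext
  · simp [sylvesterIndex, Nat.div_eq_of_lt hi]
  · simp [sylvesterIndex, Nat.mod_eq_of_lt hi]

lemma sylvesterIndex_of_le {d : ℕ} (i : Fin (d + d)) (hi : d ≤ (i : ℕ)) :
    sylvesterIndex d i = (1, ⟨i - d, by omega⟩) := by
  have := i.isLt
  ext
  · simp [sylvesterIndex, Nat.div_eq_of_lt_le (k := 1) (n := d) (m := i) (by omega) (by omega)]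
  · simp [sylvesterIndex, Nat.mod_eq_sub_mod hi, Nat.mod_eq_of_lt (show (i : ℕ) - d < d by omega)]

def sylvesterRow (d : ℕ) (F : Fin 2 → MvPolynomial (Fin 2) K) (x : Fin 2 × Fin d) :
    MvPolynomial (Fin 2) K :=
  X 0 ^ (d - 1 - x.2) * X 1 ^ (x.2 : ℕ) * F x.1

def sylvesterMatrix (d : ℕ) (F : Fin 2 → MvPolynomial (Fin 2) K) :
    Matrix (Fin (d + d)) (Fin (d + d)) K :=
  Matrix.of fun i j => coeffVec (d + d - 1) (sylvesterRow d F (sylvesterIndex d i)) (d + d - 1 - j)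

lemma sylvesterRow_isHomogeneous {d : ℕ} {F : Fin 2 → MvPolynomial (Fin 2) K}
    (hF : ∀ r, (F r).IsHomogeneous d) (x : Fin 2 × Fin d) :
    (sylvesterRow d F x).IsHomogeneous (d + d - 1) := by
  have := x.2.isLt
  rw [sylvesterRow, show d + d - 1 = d - 1 + d by omega]
  exact
    (isHomogeneous_X_pow_mul_X_pow (K := K) (k := d - 1) (j := x.2) (by omega)).mul (hF x.1)

lemma coeffVec_X_pow_mul_X_pow_mul_toForm_of_lt {d s : ℕ} (hs : s < d) (p : ℕ → K) {j : ℕ}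
    (hj : j < d + d) :
    coeffVec (d + d - 1) (X 0 ^ (d - 1 - s) * X 1 ^ s * toForm d p) (d + d - 1 - j) =
      if s ≤ j ∧ j ≤ s + d then p (d - (j - s)) else 0 := by
  have h := coeffVec_X_pow_mul_X_pow_mul_toForm (d - 1 - s) s d p (d + d - 1 - j)
  rw [show d - 1 - s + s + d = d + d - 1 by omega] at h
  rw [h]
  split_ifs with h₁ h₂ h₂
  · congr 1; omega
  · omega
  · omega
  · rfl

lemma sylRes_eq_det_sylvesterMatrix (d : ℕ) (p q : ℕ → K) :
    sylRes d d p q = (sylvesterMatrix d ![toForm d p, toForm d q]).det := by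
  unfold sylRes
  congr 1
  ext i j
  simp only [Matrix.of_apply, sylvesterMatrix, sylvesterRow]
  by_cases hi : (i : ℕ) < d
  · rw [if_pos hi, sylvesterIndex_of_lt i hi]
    exact (coeffVec_X_pow_mul_X_pow_mul_toForm_of_lt hi p j.isLt).symm
  · rw [if_neg hi, sylvesterIndex_of_le i (not_lt.1 hi)]
    dsimp only
    refine ((coeffVec_X_pow_mul_X_pow_mul_toForm_of_lt ?_ q j.isLt).trans ?_).symm
    · omega
    · exact if_congr (by omega) rfl rfl

lemma sylvesterMatrix_mulVec (d : ℕ) (B : Matrix (Fin 2) (Fin 2) K)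
    (F : Fin 2 → MvPolynomial (Fin 2) K) :
    sylvesterMatrix d (B.map C *ᵥ F) =
      (B ⊗ₖ (1 : Matrix (Fin d) (Fin d) K)).submatrix (sylvesterIndex d) (sylvesterIndex d) *
        sylvesterMatrix d F := by
  ext i j
  rw [Matrix.mul_apply, ← (sylvesterIndex d).symm.sum_comp]
  simp only [sylvesterMatrix, sylvesterRow, Matrix.of_apply, Matrix.submatrix_apply,
    Equiv.apply_symm_apply, Matrix.kroneckerMap_apply, Fintype.sum_prod_type, Matrix.one_apply,
    Matrix.mulVec, dotProduct, Matrix.map_apply, Finset.mul_sum, coeffVec, coeff_sum]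
  refine Finset.sum_congr rfl fun r _ => ?_
  rw [mul_left_comm, coeff_C_mul]
  simp [Finset.sum_ite_eq]

lemma kronecker_substMatrix_mul_sylvesterMatrix (d : ℕ) (A : Matrix (Fin 2) (Fin 2) K)
    {F : Fin 2 → MvPolynomial (Fin 2) K} (hF : ∀ r, (F r).IsHomogeneous d) :
    ((1 : Matrix (Fin 2) (Fin 2) K) ⊗ₖ substMatrix d A).submatrix (sylvesterIndex d)
        (sylvesterIndex d) * sylvesterMatrix d (fun r => substMat A (F r)) =
      sylvesterMatrix d F * substMatrix (d + d) A := by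
  ext i j
  rw [Matrix.mul_apply, Matrix.mul_apply, ← (sylvesterIndex d).symm.sum_comp]
  simp only [sylvesterMatrix, Matrix.of_apply, Matrix.submatrix_apply, Equiv.apply_symm_apply]
  rw [← coeffVec_substMat_eq_sum (sylvesterRow_isHomogeneous hF _) A j]
  generalize sylvesterIndex d i = x
  obtain ⟨r, s⟩ := x
  have hs := s.isLt
  have hmono := sum_C_coeffVec_mul_X_pow_mul_X_pow (N := d) (by omega)
    ((isHomogeneous_X_pow_mul_X_pow (k := d - 1) (j := s) (by omega)).substMat A)
  rw [sylvesterRow, substMat_eq_aeval, map_mul, ← substMat_eq_aeval, ← hmono]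
  simp only [Fintype.sum_prod_type, Matrix.kroneckerMap_apply, Matrix.one_apply, sylvesterRow,
    Finset.sum_mul, coeffVec, coeff_sum, mul_assoc, coeff_C_mul]
  rw [Fintype.sum_eq_single r fun x hx => by simp [Ne.symm hx]]
  simp only [if_true, one_mul]
  rfl

lemma sylRes_map {R S : Type*} [CommRing R] [CommRing S] (φ : R →+* S) (m n : ℕ)
    (p q : ℕ → R) : φ (sylRes m n p q) = sylRes m n (φ ∘ p) (φ ∘ q) := by
  rw [sylRes, sylRes, RingHom.map_det]
  congr 1
  ext i j
  simp only [RingHom.mapMatrix_apply, Matrix.map_apply, Matrix.of_apply, Function.comp_apply]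
  split_ifs <;> simp

lemma exists_algebraMap_eq_sylRes {R S : Type*} [CommRing R] [CommRing S] [Algebra R S]
    (m n : ℕ) {p q : ℕ → S} (hp : ∀ i, ∃ a : R, algebraMap R S a = p i)
    (hq : ∀ i, ∃ a : R, algebraMap R S a = q i) :
    ∃ r : R, algebraMap R S r = sylRes m n p q := by
  choose p' hp' using hp
  choose q' hq' using hq
  refine ⟨sylRes m n p' q', ?_⟩
  rw [sylRes_map]
  congr
  · exact funext hp'
  · exact funext hq'

end Sylvester

section Transform

variable {K : Type*} [CommRing K]

lemma toForm_mul_FA_GA (d : ℕ) (f g : ℕ → K) (l : K)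
    (A : Matrix (Fin 2) (Fin 2) K) :
    ![toForm d (fun i => l * FA d f g A i), toForm d (fun i => l * GA d f g A i)] =
      (l • A.adjugate).map C *ᵥ fun r => substMat A (![toForm d f, toForm d g] r) := by
  have hf := (isHomogeneous_toForm d f).substMat A
  have hg := (isHomogeneous_toForm d g).substMat A
  rw [FA, GA, ← map_neg, toForm_mul_coeffVec ((hf.C_mul _).sub (hg.C_mul _)),
    toForm_mul_coeffVec ((hf.C_mul _).add (hg.C_mul _)), Matrix.mulVec_fin_two,
    Matrix.adjugate_fin_two]
  simp only [Matrix.map_apply, Matrix.smul_apply, Matrix.of_apply, Matrix.cons_val_zero,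
    Matrix.cons_val_one, Matrix.cons_val', Matrix.cons_val_fin_one, smul_eq_mul, map_mul, map_neg]
  ring_nf

lemma mul_FA_add_mul_GA (d : ℕ) (f g : ℕ → K) (A : Matrix (Fin 2) (Fin 2) K) (i : ℕ) :
    A 0 0 * FA d f g A i + A 0 1 * GA d f g A i =
      A.det * coeffVec d (substMat A (toForm d f)) i := by
  simp only [FA, GA, coeffVec, ← coeff_C_mul, ← coeff_add]
  congr 1
  rw [Matrix.det_fin_two]
  simp only [map_sub, map_mul]
  ring

lemma FA_one (d : ℕ) (f g : ℕ → K) : FA d f g 1 = coeffVec d (toForm d f) := by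
  simp [FA, substMat_one]

lemma GA_one (d : ℕ) (f g : ℕ → K) : GA d f g 1 = coeffVec d (toForm d g) := by
  simp [GA, substMat_one]

lemma FA_smul (d : ℕ) (f g : ℕ → K) (m : K)
    (A : Matrix (Fin 2) (Fin 2) K) (i : ℕ) : FA d f g (m • A) i = m ^ (d + 1) * FA d f g A i := by
  simp only [FA, coeffVec, Matrix.smul_apply, smul_eq_mul, substMat_smul_toForm, ← coeff_C_mul]
  congr 1
  simp only [map_mul, map_pow]
  ring

lemma GA_smul (d : ℕ) (f g : ℕ → K) (m : K)
    (A : Matrix (Fin 2) (Fin 2) K) (i : ℕ) : GA d f g (m • A) i = m ^ (d + 1) * GA d f g A i := by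
  simp only [GA, coeffVec, Matrix.smul_apply, smul_eq_mul, substMat_smul_toForm, ← coeff_C_mul]
  congr 1
  simp only [map_mul, map_pow]
  ring

end Transform

section ResultantLaw

lemma sum_range_id_add_self (d : ℕ) :
    ∑ j ∈ Finset.range (d + d), j = (∑ j ∈ Finset.range d, j) * 2 + d * d := by
  rw [Finset.sum_range_add, Finset.sum_add_distrib, Finset.sum_const, Finset.card_range,
    smul_eq_mul]
  ring

variable {K : Type*} [Field K]

lemma det_substMatrix (N : ℕ) (A : Matrix (Fin 2) (Fin 2) K) :
    (substMatrix N A).det = A.det ^ ∑ j ∈ Finset.range N, j := by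
  induction A using Matrix.diagonal_transvection_induction with
  | hdiag D _ => exact det_substMatrix_of_upper N (by simp)
  | htransvec t =>
    have hupper (c : K) : (substMatrix N (Matrix.transvection 0 1 c)).det = 1 := by
      rw [det_substMatrix_of_upper N (by simp [Matrix.transvection]),
        Matrix.det_transvection_of_ne _ _ (by decide), one_pow]
    rw [Matrix.TransvectionStruct.det, one_pow]
    obtain ⟨i, j, hij, c⟩ := t
    fin_cases i <;> fin_cases j
    · exact absurd rfl hij
    · exact hupper c
    · -- conjugating by the swap `w` turns a lower transvection into an upper one
      set w : Matrix (Fin 2) (Fin 2) K := !![0, 1; 1, 0]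
      have hconj : Matrix.transvection 1 0 c = w * Matrix.transvection 0 1 c * w := by
        ext a b
        simp only [w, Matrix.mul_apply, Fin.sum_univ_two]
        fin_cases a <;> fin_cases b <;> simp [Matrix.transvection]
      have hw : w * w = 1 := by
        ext a b
        fin_cases a <;> fin_cases b <;> simp [w, Matrix.mul_apply]
      change (substMatrix N (Matrix.transvection 1 0 c)).det = 1
      rw [hconj, substMatrix_mul, substMatrix_mul,
        Matrix.det_mul, Matrix.det_mul, hupper, mul_one, ← Matrix.det_mul, ← substMatrix_mul, hw,
        substMatrix_one, Matrix.det_one]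
    · exact absurd rfl hij
  | hmul A B hA hB => rw [substMatrix_mul, Matrix.det_mul, hA, hB, Matrix.det_mul, mul_pow]

lemma det_sylvesterMatrix_substMat (d : ℕ) {A : Matrix (Fin 2) (Fin 2) K} (hA : A.det ≠ 0)
    {F : Fin 2 → MvPolynomial (Fin 2) K} (hF : ∀ r, (F r).IsHomogeneous d) :
    (sylvesterMatrix d fun r => substMat A (F r)).det =
      A.det ^ (d * d) * (sylvesterMatrix d F).det := by
  have h := congrArg Matrix.det (kronecker_substMatrix_mul_sylvesterMatrix d A hF)
  rw [Matrix.det_mul, Matrix.det_mul, Matrix.det_submatrix_equiv_self, Matrix.det_kronecker,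
    Matrix.det_one, one_pow, one_mul, det_substMatrix, det_substMatrix, Fintype.card_fin,
    sum_range_id_add_self, pow_add, pow_mul] at h
  refine mul_left_cancel₀ (pow_ne_zero 2 (pow_ne_zero (∑ j ∈ Finset.range d, j) hA)) ?_
  rw [h]
  ring

theorem sylRes_mul_FA_GA (d : ℕ) (f g : ℕ → K) (l : K) {A : Matrix (Fin 2) (Fin 2) K}
    (hA : A.det ≠ 0) :
    sylRes d d (fun i => l * FA d f g A i) (fun i => l * GA d f g A i) =
      l ^ (2 * d) * A.det ^ (d * d + d) * sylRes d d f g := by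
  have hF : ∀ r, (![toForm d f, toForm d g] r).IsHomogeneous d := fun r => by
    fin_cases r <;> exact isHomogeneous_toForm d _
  rw [sylRes_eq_det_sylvesterMatrix, sylRes_eq_det_sylvesterMatrix, toForm_mul_FA_GA,
    sylvesterMatrix_mulVec, Matrix.det_mul, Matrix.det_submatrix_equiv_self, Matrix.det_kronecker,
    Matrix.det_one, one_pow, mul_one, Fintype.card_fin, det_sylvesterMatrix_substMat d hA hF,
    Matrix.det_smul, Matrix.det_adjugate, Fintype.card_fin]
  ring

end ResultantLaw

section Minimality

variable {R K : Type*} [CommRing R] [Field K] [Algebra R K]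

lemma exists_algebraMap_eq_coeffVec_toForm {d : ℕ} {f : ℕ → K}
    (hf : ∀ i, ∃ a : R, algebraMap R K a = f i) (i : ℕ) :
    ∃ a : R, algebraMap R K a = coeffVec d (toForm d f) i := by
  rw [coeffVec_toForm]
  split_ifs
  · exact hf i
  · exact ⟨0, map_zero _⟩

theorem resIdeal_eq_span_singleton (hinj : Function.Injective (algebraMap R K)) {d : ℕ}
    {f g : ℕ → K} (hf : ∀ i, ∃ a : R, algebraMap R K a = f i)
    (hg : ∀ i, ∃ a : R, algebraMap R K a = g i) {r : R} (hr : algebraMap R K r = sylRes d d f g)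
    (hmin : ∀ (l : K) (A : Matrix (Fin 2) (Fin 2) K), l ≠ 0 → A.det ≠ 0 →
      (∀ i, ∃ a : R, algebraMap R K a = l * FA d f g A i) →
      (∀ i, ∃ b : R, algebraMap R K b = l * GA d f g A i) →
      ∃ z : R, algebraMap R K z = l ^ (2 * d) * A.det ^ (d * d + d)) :
    ResIdeal R d f g = Ideal.span {r} := by
  apply le_antisymm
  · rw [ResIdeal, Ideal.span_le]
    rintro r' ⟨l, A, hl, hA, hF, hG, hr'⟩
    obtain ⟨z, hz⟩ := hmin l A hl hA hF hG
    refine Ideal.mem_span_singleton'.2 ⟨z, hinj ?_⟩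
    rw [map_mul, hz, hr, hr', sylRes_mul_FA_GA d f g l hA]
  · rw [Ideal.span_singleton_le_iff_mem]
    refine Ideal.subset_span ⟨1, 1, one_ne_zero, by simp, fun i => ?_, fun i => ?_, ?_⟩
    · simpa [FA_one] using exists_algebraMap_eq_coeffVec_toForm hf i
    · simpa [GA_one] using exists_algebraMap_eq_coeffVec_toForm hg i
    · rw [hr, sylRes_mul_FA_GA d f g 1 (by simp)]
      simp

end Minimality

section Integrality

lemma Polynomial.content_pow {R : Type*} [CommRing R] [StrongNormalizedGCDMonoid R]
    (p : Polynomial R) (k : ℕ) : (p ^ k).content = p.content ^ k := by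
  induction k with
  | zero => simp
  | succ k ih => rw [pow_succ, Polynomial.content_mul, ih, pow_succ]

lemma Polynomial.content_eq_abs_mul_content {W V : Polynomial ℤ} {t : ℚ}
    (h : W.map (Int.castRingHom ℚ) = Polynomial.C t * V.map (Int.castRingHom ℚ)) :
    (W.content : ℚ) = |t| * V.content := by
  have hZ : Polynomial.C (t.den : ℤ) * W = Polynomial.C t.num * V := by
    apply Polynomial.map_injective (Int.castRingHom ℚ) Int.cast_injective
    rw [Polynomial.map_mul, Polynomial.map_mul, Polynomial.map_C, Polynomial.map_C, h,
      ← mul_assoc, ← Polynomial.C_mul]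
    congr 2
    simp [mul_comm, Rat.mul_den_eq_num]
  have hc := congrArg Polynomial.content hZ
  rw [Polynomial.content_C_mul, Polynomial.content_C_mul, ← Int.abs_eq_normalize,
    ← Int.abs_eq_normalize, Nat.abs_cast] at hc
  have hden : (t.den : ℚ) ≠ 0 := by positivity
  rw [← Rat.num_div_den t, abs_div, Nat.abs_cast, div_mul_eq_mul_div, eq_div_iff hden, mul_comm]
  exact_mod_cast hc

lemma Polynomial.content_C_mul_X_add_C_dvd {R : Type*} [CommRing R] [IsDomain R]
    [NormalizedGCDMonoid R] (a b : R) :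
    (Polynomial.C a * Polynomial.X + Polynomial.C b).content ∣ a ∧
      (Polynomial.C a * Polynomial.X + Polynomial.C b).content ∣ b := by
  have h1 := (Polynomial.C a * Polynomial.X + Polynomial.C b).content_dvd_coeff 1
  have h0 := (Polynomial.C a * Polynomial.X + Polynomial.C b).content_dvd_coeff 0
  rw [Polynomial.coeff_add, Polynomial.coeff_C_mul_X, Polynomial.coeff_C, if_pos rfl,
    if_neg one_ne_zero, add_zero] at h1
  rw [Polynomial.coeff_add, Polynomial.coeff_C_mul_X, Polynomial.coeff_C, if_neg zero_ne_one,
    if_pos rfl, zero_add] at h0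
  exact ⟨h1, h0⟩

lemma exists_int_eq_mul_det_pow (n : ℕ) {B : Matrix (Fin 2) (Fin 2) ℤ} (hB : B.det ≠ 0)
    {P Q : Polynomial ℤ} {t : ℚ}
    (h : (Polynomial.C (B 1 0) * P + Polynomial.C (B 1 1) * Q).map (Int.castRingHom ℚ) =
      Polynomial.C t * ((Polynomial.C (B 0 0) * Polynomial.X + Polynomial.C (B 0 1)) ^ n *
        (Polynomial.C (B 1 0) * Polynomial.X + Polynomial.C (B 1 1)) ^ (n + 1)).map
          (Int.castRingHom ℚ)) :
    ∃ z : ℤ, (z : ℚ) = t * B.det ^ n := by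
  set La := Polynomial.C (B 0 0) * Polynomial.X + Polynomial.C (B 0 1)
  set Lb := Polynomial.C (B 1 0) * Polynomial.X + Polynomial.C (B 1 1)
  obtain ⟨hLa0, hLa1⟩ := Polynomial.content_C_mul_X_add_C_dvd (B 0 0) (B 0 1)
  obtain ⟨hLb0, hLb1⟩ := Polynomial.content_C_mul_X_add_C_dvd (B 1 0) (B 1 1)
  have hLb : Lb.content ≠ 0 := by
    intro h0
    obtain ⟨⟨u, hu⟩, ⟨v, hv⟩⟩ := And.intro (h0 ▸ hLb0) (h0 ▸ hLb1)
    exact hB (by rw [Matrix.det_fin_two, hu, hv]; ring)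
  obtain ⟨w, hw⟩ : Lb.content ∣ (Polynomial.C (B 1 0) * P + Polynomial.C (B 1 1) * Q).content :=
    Polynomial.dvd_content_iff_C_dvd.2 (dvd_add (dvd_mul_of_dvd_left (map_dvd _ hLb0) P)
      (dvd_mul_of_dvd_left (map_dvd _ hLb1) Q))
  have hc := Polynomial.content_eq_abs_mul_content h
  rw [hw, Polynomial.content_mul, Polynomial.content_pow, Polynomial.content_pow] at hc
  have hw' : (w : ℚ) = |t| * (La.content * Lb.content : ℤ) ^ n := by
    apply mul_left_cancel₀ (Int.cast_ne_zero.2 hLb : (Lb.content : ℚ) ≠ 0)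
    push_cast at hc ⊢
    rw [hc]
    ring
  obtain ⟨e, he⟩ : La.content * Lb.content ∣ B.det := by
    rw [Matrix.det_fin_two]
    exact dvd_sub (mul_dvd_mul hLa0 hLb1) (mul_dvd_mul hLa1 hLb0)
  rcases abs_choice t with ht | ht
  · exact ⟨w * e ^ n, by push_cast [he, hw', ht]; ring⟩
  · exact ⟨-(w * e ^ n), by push_cast [he, hw', ht]; ring⟩

lemma aeval_toForm {K : Type*} [CommRing K] (d : ℕ) (h : ℕ → K) :
    aeval ![Polynomial.X, 1] (toForm d h) =
      ∑ i ∈ Finset.range (d + 1), Polynomial.C (h i) * Polynomial.X ^ i := by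
  simp [toForm, Polynomial.algebraMap_eq]

lemma exists_map_eq_aeval_toForm {d : ℕ} {h : ℕ → ℚ} (hh : ∀ i, ∃ a : ℤ, (a : ℚ) = h i) :
    ∃ P : Polynomial ℤ, P.map (Int.castRingHom ℚ) = aeval ![Polynomial.X, 1] (toForm d h) := by
  choose a ha using hh
  exact ⟨∑ i ∈ Finset.range (d + 1), Polynomial.C (a i) * Polynomial.X ^ i, by
    simp [aeval_toForm, Polynomial.map_sum, ← ha]⟩

theorem exists_int_eq_mul_det_pow_succ_of_int (n : ℕ) (f g : ℕ → ℚ)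
    (hg : toForm (2 * n + 1) g = X 0 ^ n * X 1 ^ (n + 1)) (l : ℚ)
    {B : Matrix (Fin 2) (Fin 2) ℤ} (hB : B.det ≠ 0)
    (hF : ∀ i, ∃ a : ℤ, (a : ℚ) = l * FA (2 * n + 1) f g (B.map (↑)) i)
    (hG : ∀ i, ∃ b : ℤ, (b : ℚ) = l * GA (2 * n + 1) f g (B.map (↑)) i) :
    ∃ z : ℤ, (z : ℚ) = l * (B.map (↑)).det ^ (n + 1) := by
  set A : Matrix (Fin 2) (Fin 2) ℚ := B.map (↑)
  have hdet : A.det = B.det := ((Int.castRingHom ℚ).map_det B).symm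
  obtain ⟨P, hP⟩ := exists_map_eq_aeval_toForm (d := 2 * n + 1) hF
  obtain ⟨Q, hQ⟩ := exists_map_eq_aeval_toForm (d := 2 * n + 1) hG
  -- second row of `A · [λ F_A, λ G_A] = λ det A · [F ∘ A, G ∘ A]`
  have hrel : C (A 1 0) * toForm (2 * n + 1) (fun i => l * FA (2 * n + 1) f g A i) +
      C (A 1 1) * toForm (2 * n + 1) (fun i => l * GA (2 * n + 1) f g A i) =
      C (l * A.det) * substMat A (X 0 ^ n * X 1 ^ (n + 1)) := by
    have h0 := congrFun (toForm_mul_FA_GA (2 * n + 1) f g l A) 0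
    have h1 := congrFun (toForm_mul_FA_GA (2 * n + 1) f g l A) 1
    rw [Matrix.mulVec_fin_two, Matrix.adjugate_fin_two] at h0 h1
    simp only [Matrix.map_apply, Matrix.smul_apply, Matrix.of_apply, Matrix.cons_val_zero,
      Matrix.cons_val_one, Matrix.cons_val', Matrix.cons_val_fin_one, smul_eq_mul, map_mul,
      map_neg] at h0 h1
    rw [h0, h1, ← hg, Matrix.det_fin_two, map_mul, map_sub, map_mul, map_mul]
    ring
  have hdehom := congrArg (aeval ![(Polynomial.X : Polynomial ℚ), 1]) hrel
  refine (exists_int_eq_mul_det_pow n hB (P := P) (Q := Q) (t := l * A.det) ?_).imp fun z hz => by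
    rw [hz, hdet]; ring
  simp only [map_add, map_mul, aeval_C, ← hP, ← hQ] at hdehom
  simpa [substMat_eq_aeval, Polynomial.algebraMap_eq, A, mul_assoc] using hdehom

theorem exists_int_eq_mul_det_pow_succ (n : ℕ) (f g : ℕ → ℚ)
    (hg : toForm (2 * n + 1) g = X 0 ^ n * X 1 ^ (n + 1)) (l : ℚ)
    {A : Matrix (Fin 2) (Fin 2) ℚ} (hA : A.det ≠ 0)
    (hF : ∀ i, ∃ a : ℤ, (a : ℚ) = l * FA (2 * n + 1) f g A i)
    (hG : ∀ i, ∃ b : ℤ, (b : ℚ) = l * GA (2 * n + 1) f g A i) :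
    ∃ z : ℤ, (z : ℚ) = l * A.det ^ (n + 1) := by
  -- `(λ, A)` and `(λ / m^(d+1), m A)` give the same model; choose `m` with `m A` integral
  obtain ⟨⟨m, hm⟩, hmA⟩ := IsLocalization.exist_integer_multiples_of_finite (nonZeroDivisors ℤ)
    fun p : Fin 2 × Fin 2 => A p.1 p.2
  choose b hb using fun p => RingHom.mem_rangeS.1 (hmA p)
  set B : Matrix (Fin 2) (Fin 2) ℤ := Matrix.of fun i j => b (i, j)
  have hm0 : (m : ℚ) ≠ 0 := Int.cast_ne_zero.2 (nonZeroDivisors.ne_zero hm)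
  have hBA : B.map (↑) = (m : ℚ) • A := by
    ext i j
    simpa [B, Algebra.smul_def] using hb (i, j)
  have hBdet : (B.map (↑) : Matrix (Fin 2) (Fin 2) ℚ).det = m ^ 2 * A.det := by
    rw [hBA, Matrix.det_smul, Fintype.card_fin]
  have hB : B.det ≠ 0 := by
    have := ((Int.castRingHom ℚ).map_det B).trans hBdet
    exact fun h0 => by simp [h0, hm0, hA] at this
  obtain ⟨z, hz⟩ := exists_int_eq_mul_det_pow_succ_of_int n f g hg (l / m ^ (2 * n + 2)) hB
    (fun i => (hF i).imp fun a ha => by rw [ha, hBA, FA_smul]; field_simp)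
    (fun i => (hG i).imp fun a ha => by rw [ha, hBA, GA_smul]; field_simp)
  refine ⟨z, ?_⟩
  rw [hz, hBdet]
  field_simp
  ring

end Integrality

section Example

def coeffF (n : ℕ) (c : ℚ) : ℕ → ℚ :=
  fun i => if i = 2 * n + 1 then 1 else if i = 0 then -c ^ (n + 1) else 0

def coeffG (n : ℕ) : ℕ → ℚ := fun i => if i = n then 1 else 0

def coeffF' (n : ℕ) (c : ℚ) : ℕ → ℚ :=
  fun i => if i = 2 * n + 1 then c ^ n else if i = 0 then -1 else 0

variable (n : ℕ) (c : ℚ)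

lemma zpow_neg_natCast_add_one : c ^ (-((n : ℤ) + 1)) = (c ^ (n + 1))⁻¹ := by
  rw [zpow_neg, ← Nat.cast_succ, zpow_natCast]

lemma toForm_coeffF : toForm (2 * n + 1) (coeffF n c) =
    X 0 ^ (2 * n + 1) - C (c ^ (n + 1)) * X 1 ^ (2 * n + 1) := by
  rw [show coeffF n c = (fun i => if i = 2 * n + 1 then 1 else 0) +
      (fun i => if i = 0 then -c ^ (n + 1) else 0) by
    funext i; simp only [coeffF, Pi.add_apply]; split_ifs <;> first | omega | simp,
    toForm_add, toForm_ite_eq le_rfl, toForm_ite_eq (Nat.zero_le _)]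
  simp [sub_eq_add_neg]

lemma toForm_coeffF' : toForm (2 * n + 1) (coeffF' n c) =
    C (c ^ n) * X 0 ^ (2 * n + 1) - X 1 ^ (2 * n + 1) := by
  rw [show coeffF' n c = (fun i => if i = 2 * n + 1 then c ^ n else 0) +
      (fun i => if i = 0 then (-1 : ℚ) else 0) by
    funext i; simp only [coeffF', Pi.add_apply]; split_ifs <;> first | omega | simp,
    toForm_add, toForm_ite_eq le_rfl, toForm_ite_eq (Nat.zero_le _)]
  simp [sub_eq_add_neg]

lemma toForm_coeffG : toForm (2 * n + 1) (coeffG n) = X 0 ^ n * X 1 ^ (n + 1) := by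
  unfold coeffG
  rw [toForm_ite_eq (by omega), map_one, one_mul, show 2 * n + 1 - n = n + 1 by omega]

lemma coeffF'_eq_mul_FA (hc : c ≠ 0) (g : ℕ → ℚ) (i : ℕ) :
    coeffF' n c i = c ^ (-((n : ℤ) + 1)) *
      FA (2 * n + 1) (coeffF n c) g (Matrix.of ![![c, 0], ![0, 1]]) i := by
  have hsubst : substMat (Matrix.of ![![c, 0], ![0, 1]]) (toForm (2 * n + 1) (coeffF n c)) =
      C (c ^ (n + 1)) * toForm (2 * n + 1) (coeffF' n c) := by
    rw [toForm_coeffF, toForm_coeffF']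
    simp only [substMat_eq_aeval, map_sub, map_mul, map_pow, aeval_X, aeval_C, algebraMap_eq,
      Matrix.of_apply, Matrix.cons_val', Matrix.cons_val_zero, Matrix.cons_val_fin_one,
      Matrix.cons_val_one, C_0, C_1, zero_mul, add_zero, one_mul, zero_add]
    ring
  have hvanish : ∀ i, 2 * n + 1 < i → coeffF' n c i = 0 := fun i hi => by
    rw [coeffF', if_neg (by omega), if_neg (by omega)]
  simp only [FA, Matrix.of_apply, Matrix.cons_val_one, Matrix.cons_val_zero,
    map_one, map_zero, one_mul, zero_mul, sub_zero, hsubst, coeffVec, coeff_C_mul]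
  rw [← coeffVec, coeffVec_toForm_eq_of_forall_gt hvanish, zpow_neg_natCast_add_one,
    inv_mul_cancel_left₀ (pow_ne_zero _ hc)]

lemma coeffG_eq_mul_GA (hc : c ≠ 0) (f : ℕ → ℚ) (i : ℕ) :
    coeffG n i = c ^ (-((n : ℤ) + 1)) *
      GA (2 * n + 1) f (coeffG n) (Matrix.of ![![c, 0], ![0, 1]]) i := by
  have hsubst : substMat (Matrix.of ![![c, 0], ![0, 1]]) (toForm (2 * n + 1) (coeffG n)) =
      C (c ^ n) * toForm (2 * n + 1) (coeffG n) := by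
    rw [toForm_coeffG]
    simp only [substMat_eq_aeval, map_mul, map_pow, aeval_X, Matrix.of_apply, Matrix.cons_val',
      Matrix.cons_val_zero, Matrix.cons_val_fin_one, Matrix.cons_val_one, C_0, C_1, zero_mul,
      add_zero, one_mul, zero_add]
    ring
  have hvanish : ∀ i, 2 * n + 1 < i → coeffG n i = 0 := fun i hi => by
    rw [coeffG, if_neg (by omega)]
  simp only [GA, Matrix.of_apply, Matrix.cons_val_one, Matrix.cons_val_zero, map_zero, neg_zero,
    zero_mul, zero_add, hsubst, coeffVec, ← mul_assoc, ← map_mul, coeff_C_mul, ← pow_succ']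
  rw [← coeffVec, coeffVec_toForm_eq_of_forall_gt hvanish, zpow_neg_natCast_add_one,
    inv_mul_cancel₀ (pow_ne_zero _ hc), one_mul]

lemma coeffVec_substMat_toForm_coeffF (A : Matrix (Fin 2) (Fin 2) ℚ) :
    coeffVec (2 * n + 1) (substMat A (toForm (2 * n + 1) (coeffF n c))) (2 * n + 1) =
        A 0 0 ^ (2 * n + 1) - c ^ (n + 1) * A 1 0 ^ (2 * n + 1) ∧
      coeffVec (2 * n + 1) (substMat A (toForm (2 * n + 1) (coeffF n c))) 0 =
        A 0 1 ^ (2 * n + 1) - c ^ (n + 1) * A 1 1 ^ (2 * n + 1) := by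
  have hcoeff (i : ℕ) : coeffVec (2 * n + 1) (substMat A (toForm (2 * n + 1) (coeffF n c))) i =
      coeffVec (2 * n + 1) ((C (A 0 0) * X 0 + C (A 0 1) * X 1) ^ (2 * n + 1)) i - c ^ (n + 1) *
        coeffVec (2 * n + 1) ((C (A 1 0) * X 0 + C (A 1 1) * X 1) ^ (2 * n + 1)) i := by
    rw [toForm_coeffF]
    simp only [substMat_eq_aeval, map_sub, map_mul, map_pow, aeval_X, aeval_C, algebraMap_eq,
      coeffVec, coeff_sub]
    rw [← C_pow, coeff_C_mul]
  simp [hcoeff, coeffVec_add_pow]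

end Example

lemma prime_dvd_det_of_eq {n : ℕ} (hn : 1 ≤ n) {M : Matrix (Fin 2) (Fin 2) ℤ} {w c p : ℤ}
    (hw : IsUnit w) (hp : Prime p) (hpc : p ∣ c)
    (htop : M 0 0 * c ^ n = w * (M 0 0 ^ (2 * n + 1) - c ^ (n + 1) * M 1 0 ^ (2 * n + 1)))
    (hbot : -M 0 0 = w * (M 0 1 ^ (2 * n + 1) - c ^ (n + 1) * M 1 1 ^ (2 * n + 1))) :
    p ∣ M.det := by
  have hpcn : p ∣ c ^ n := dvd_pow hpc (by omega)
  have hpcn' : p ∣ c ^ (n + 1) := dvd_pow hpc (by omega)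
  have h00 : p ∣ M 0 0 := by
    refine hp.dvd_of_dvd_pow (n := 2 * n + 1) (hw.dvd_mul_left.1 ?_)
    rw [show w * M 0 0 ^ (2 * n + 1) =
      M 0 0 * c ^ n + w * c ^ (n + 1) * M 1 0 ^ (2 * n + 1) by linear_combination -htop]
    exact dvd_add (hpcn.mul_left _) ((hpcn'.mul_left _).mul_right _)
  have h01 : p ∣ M 0 1 := by
    refine hp.dvd_of_dvd_pow (n := 2 * n + 1) (hw.dvd_mul_left.1 ?_)
    rw [show w * M 0 1 ^ (2 * n + 1) =
      -M 0 0 + w * c ^ (n + 1) * M 1 1 ^ (2 * n + 1) by linear_combination -hbot]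
    exact dvd_add h00.neg_right ((hpcn'.mul_left _).mul_right _)
  rw [Matrix.det_fin_two]
  exact dvd_sub (h00.mul_right _) (h01.mul_right _)

section ExampleModels

variable (n : ℕ)

lemma exists_intCast_eq_coeffF (c : ℤ) (i : ℕ) : ∃ a : ℤ, (a : ℚ) = coeffF n c i :=
  ⟨if i = 2 * n + 1 then 1 else if i = 0 then -c ^ (n + 1) else 0, by
    unfold coeffF; split_ifs <;> simp⟩

lemma exists_intCast_eq_coeffG (i : ℕ) : ∃ a : ℤ, (a : ℚ) = coeffG n i :=
  ⟨if i = n then 1 else 0, by unfold coeffG; split_ifs <;> simp⟩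

lemma exists_intCast_eq_coeffF' (c : ℤ) (i : ℕ) : ∃ a : ℤ, (a : ℚ) = coeffF' n c i :=
  ⟨if i = 2 * n + 1 then c ^ n else if i = 0 then -1 else 0, by
    unfold coeffF'; split_ifs <;> simp⟩

lemma sylRes_coeffF_eq_sylRes_coeffF' {c : ℚ} (hc : c ≠ 0) :
    sylRes (2 * n + 1) (2 * n + 1) (coeffF n c) (coeffG n) =
      sylRes (2 * n + 1) (2 * n + 1) (coeffF' n c) (coeffG n) := by
  have hdet : (Matrix.of ![![c, 0], ![0, 1]]).det = c := by simp [Matrix.det_fin_two]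
  have hscalar : (c ^ (-((n : ℤ) + 1))) ^ (2 * (2 * n + 1)) *
      c ^ ((2 * n + 1) * (2 * n + 1) + (2 * n + 1)) = 1 := by
    rw [zpow_neg_natCast_add_one, inv_pow, ← pow_mul,
      show (2 * n + 1) * (2 * n + 1) + (2 * n + 1) = (n + 1) * (2 * (2 * n + 1)) by ring]
    exact inv_mul_cancel₀ (pow_ne_zero _ hc)
  have hlaw := sylRes_mul_FA_GA (2 * n + 1) (coeffF n c) (coeffG n) (c ^ (-((n : ℤ) + 1)))
    (hdet ▸ hc)
  rw [← funext (coeffF'_eq_mul_FA n c hc (coeffG n)), ← funext (coeffG_eq_mul_GA n c hc _), hdet,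
    hscalar, one_mul] at hlaw
  exact hlaw.symm

theorem exists_resIdeal_coeffF_coeffG_eq_span (c : ℤ) :
    ∃ r : ℤ, (r : ℚ) = sylRes (2 * n + 1) (2 * n + 1) (coeffF n c) (coeffG n) ∧
      ResIdeal ℤ (2 * n + 1) (coeffF n c) (coeffG n) = Ideal.span {r} := by
  have hF : ∀ i, ∃ a : ℤ, algebraMap ℤ ℚ a = coeffF n c i := by
    simpa [algebraMap_int_eq] using exists_intCast_eq_coeffF n c
  have hG : ∀ i, ∃ a : ℤ, algebraMap ℤ ℚ a = coeffG n i := by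
    simpa [algebraMap_int_eq] using exists_intCast_eq_coeffG n
  obtain ⟨r, hr⟩ := exists_algebraMap_eq_sylRes (2 * n + 1) (2 * n + 1) hF hG
  refine ⟨r, by rwa [eq_intCast] at hr, resIdeal_eq_span_singleton
    (algebraMap ℤ ℚ).injective_int hF hG hr fun l A _ hA hFA hGA => ?_⟩
  obtain ⟨z, hz⟩ := exists_int_eq_mul_det_pow_succ n (coeffF n c) (coeffG n) (toForm_coeffG n) l hA
    (by simpa [algebraMap_int_eq] using hFA) (by simpa [algebraMap_int_eq] using hGA)
  exact ⟨z ^ (2 * (2 * n + 1)), by rw [eq_intCast, Int.cast_pow, hz]; ring⟩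

theorem not_exists_units_mul_FA_GA (hn : 1 ≤ n) {c : ℤ} (hc1 : c ≠ 1) (hcm1 : c ≠ -1) :
    ¬ ∃ (u : ℤˣ) (M : Matrix (Fin 2) (Fin 2) ℤ), IsUnit M.det ∧
      (∀ i, coeffF' n c i = ((u : ℤ) : ℚ) * FA (2 * n + 1) (coeffF n c) (coeffG n) (M.map (↑)) i) ∧
      (∀ i, coeffG n i = ((u : ℤ) : ℚ) * GA (2 * n + 1) (coeffF n c) (coeffG n) (M.map (↑)) i) := by
  rintro ⟨u, M, hM, hF, hG⟩
  set A : Matrix (Fin 2) (Fin 2) ℚ := M.map (↑)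
  have hdet : A.det = M.det := ((Int.castRingHom ℚ).map_det M).symm
  -- first row of `A · [F', G'] = u (det A) · [F ∘ A, G ∘ A]`
  have hrow (i : ℕ) : A 0 0 * coeffF' n c i + A 0 1 * coeffG n i =
      u * (A.det * coeffVec (2 * n + 1) (substMat A (toForm (2 * n + 1) (coeffF n c))) i) := by
    rw [hF, hG, ← mul_FA_add_mul_GA]
    ring
  obtain ⟨htop, hbot⟩ := coeffVec_substMat_toForm_coeffF n c A
  have htopZ : M 0 0 * c ^ n =
      u * M.det * (M 0 0 ^ (2 * n + 1) - c ^ (n + 1) * M 1 0 ^ (2 * n + 1)) := by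
    have h := hrow (2 * n + 1)
    simp only [coeffF', coeffG, if_pos, if_neg (show 2 * n + 1 ≠ n by omega), mul_zero, add_zero,
      htop, hdet, A, Matrix.map_apply] at h
    rw [← mul_assoc] at h
    exact_mod_cast h
  have hbotZ : -M 0 0 =
      u * M.det * (M 0 1 ^ (2 * n + 1) - c ^ (n + 1) * M 1 1 ^ (2 * n + 1)) := by
    have h := hrow 0
    simp only [coeffF', coeffG, if_neg (show 0 ≠ 2 * n + 1 by omega), if_pos,
      if_neg (show 0 ≠ n by omega), mul_zero, add_zero, mul_neg_one, hbot, hdet, A,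
      Matrix.map_apply] at h
    rw [← mul_assoc] at h
    exact_mod_cast h
  obtain ⟨p, hp, hpc⟩ := Int.exists_prime_and_dvd (show c.natAbs ≠ 1 by omega)
  exact hp.not_isUnit (isUnit_of_dvd_unit
    (prime_dvd_det_of_eq hn (u.isUnit.mul hM) hp hpc htopZ hbotZ) hM)

end ExampleModels

/-- For `n ≥ 1` and `c ∈ ℤ \ {0, ±1}`, with `d = 2n+1`, the models
`[X^(2n+1) − c^(n+1)Y^(2n+1), X^nY^(n+1)]` and `[c^nX^(2n+1) − Y^(2n+1), X^nY^(n+1)]` over `ℤ`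
are both `ℤ`-minimal models of the same class: the second is `[F,G]^{(λ,A)}` for
`(λ,A) = (c^{−n−1}, diag(c,1))` and they have equal resultants, but they are not in the same
orbit under `ℤ^× × GL₂(ℤ)`. -/
theorem statement16 (n : ℕ) (hn : 1 ≤ n) (c : ℤ) (hc0 : c ≠ 0) (hc1 : c ≠ 1) (hcm1 : c ≠ -1)
    (d : ℕ) (hd : d = 2 * n + 1)
    (f g f' g' : ℕ → ℚ)
    (hfdef : f = fun i => if i = 2 * n + 1 then 1 else if i = 0 then -(c : ℚ) ^ (n + 1) else 0)
    (hgdef : g = fun i => if i = n then 1 else 0)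
    (hf'def : f' = fun i => if i = 2 * n + 1 then (c : ℚ) ^ n else if i = 0 then -1 else 0)
    (hg'def : g' = g) :
    -- the second model is the transform of the first by (λ, A) = (c^{-n-1}, diag(c, 1))
    (∀ i, f' i = (c : ℚ) ^ (-((n : ℤ) + 1)) *
        FA d f g (Matrix.of ![![(c : ℚ), 0], ![0, 1]]) i) ∧
    (∀ i, g' i = (c : ℚ) ^ (-((n : ℤ) + 1)) *
        GA d f g (Matrix.of ![![(c : ℚ), 0], ![0, 1]]) i) ∧
    -- the two models have the same resultant
    sylRes d d f g = sylRes d d f' g' ∧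
    -- both models are ℤ-minimal models of the class of [F, G]
    (∀ i, ∃ a : ℤ, (a : ℚ) = f i) ∧ (∀ i, ∃ a : ℤ, (a : ℚ) = g i) ∧
    (∀ i, ∃ a : ℤ, (a : ℚ) = f' i) ∧ (∀ i, ∃ a : ℤ, (a : ℚ) = g' i) ∧
    (∃ r : ℤ, (r : ℚ) = sylRes d d f g ∧ ResIdeal ℤ d f g = Ideal.span {r}) ∧
    (∃ r' : ℤ, (r' : ℚ) = sylRes d d f' g' ∧ ResIdeal ℤ d f g = Ideal.span {r'}) ∧
    -- but they are not in the same (ℤ^× × GL₂(ℤ))-orbit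
    ¬ ∃ (u : ℤˣ) (M : Matrix (Fin 2) (Fin 2) ℤ), IsUnit M.det ∧
        (∀ i, f' i = ((u : ℤ) : ℚ) * FA d f g (M.map (Int.cast : ℤ → ℚ)) i) ∧
        (∀ i, g' i = ((u : ℤ) : ℚ) * GA d f g (M.map (Int.cast : ℤ → ℚ)) i) := by
  subst hd hfdef hgdef hf'def hg'def
  have hc : (c : ℚ) ≠ 0 := Int.cast_ne_zero.2 hc0
  have hres := sylRes_coeffF_eq_sylRes_coeffF' n hc
  obtain ⟨r, hr, hideal⟩ := exists_resIdeal_coeffF_coeffG_eq_span n c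
  exact ⟨coeffF'_eq_mul_FA n c hc _, coeffG_eq_mul_GA n c hc _, hres,
    exists_intCast_eq_coeffF n c, exists_intCast_eq_coeffG n, exists_intCast_eq_coeffF' n c,
    exists_intCast_eq_coeffG n, ⟨r, hr, hideal⟩, ⟨r, hr.trans hres, hideal⟩,
    not_exists_units_mul_FA_GA n hn hc1 hcm1⟩

end
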